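/- Let 𝓑 be the blocks of a q-Steiner system S(t,k,n;q) and let 𝓒_{t+2} be the set of (t+2)-dimensional subspaces C of E = F_q^n such that no (t+1)-dimensional subspace of C is contained in a block of 𝓑. Then (E, 𝓒_{t+2}) is a t-(n, t+2, λ; q) subspace design with λ = q^{k−t} · [n−k choose 1]_q · ([n−t−1 choose 1]_q − [t+1 choose 1]_q · [k−t choose 1]_q) / (q+1). -/

import Mathlib

/-!
Fix a `t`-space `T` and the block `B` through it, and sort the `(t+2)`-spaces `C ⊇ T` into
those with no `(t+1)`-subspace inside a block (the ones to be counted), those inside `B`, and the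
rest. A `C ⊄ B` contains at most one `(t+1)`-space `I` lying in a block: two of them would span
`C` and meet in a `t`-space, so their blocks coincide and contain `C ⊇ T`, i.e. equal `B`.
Hence the third class is counted by double counting the pairs `(C, I)` with `I ⊂ C` a
`(t+1)`-space in a block. Seen from `I`: if `T ⊂ I` then `I ⊂ B` and `C` is any of the
`[n-t-1]_q` spaces above `I`; otherwise `C = T + I`, which happens exactly when `T ∩ I` is a
hyperplane `S` of `T`, and the `I` meeting `T` in a given `S` are counted by a second double
counting over the `t`-spaces between `S` and `I`. All other counts are numbers of lines and planes
in quotients of `E`, and eliminating the auxiliary counts yields `λ`.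
-/

/-- 𝓑 is a q-Steiner system S(t,k,n;q) on E = K^n. -/
def IsSteinerSystem {K : Type*} [Field K] [Fintype K] {n : ℕ}
    (t k : ℕ) (𝓑 : Set (Submodule K (Fin n → K))) : Prop :=
  1 ≤ t ∧ t ≤ k ∧ k ≤ n ∧
  (∀ B ∈ 𝓑, Module.finrank K B = k) ∧
  (∀ T : Submodule K (Fin n → K), Module.finrank K T = t → ∃! B, B ∈ 𝓑 ∧ T ≤ B)

open Module Submodule Finset

/-- The Gaussian binomial `[m choose 1]_q`. -/
def qNum (q m : ℕ) : ℕ := ∑ i ∈ range m, q ^ i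

theorem qNum_two (q : ℕ) : qNum q 2 = q + 1 := by
  simp [qNum, sum_range_succ, add_comm]

theorem qNum_cast {q : ℕ} (hq : 1 < q) (m : ℕ) :
    (qNum q m : ℚ) = ((q : ℚ) ^ m - 1) / (q - 1) := by
  rw [qNum, Nat.cast_sum]
  push_cast
  exact geom_sum_eq (by exact_mod_cast hq.ne') m

theorem Nat.card_mul_eq_card_mul_of_rel {α β : Type*} [Finite α] [Finite β]
    (r : α → β → Prop) {m n : ℕ} (hm : ∀ a, Nat.card {b // r a b} = m)
    (hn : ∀ b, Nat.card {a // r a b} = n) :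
    Nat.card α * m = Nat.card β * n := by
  classical
  have := Fintype.ofFinite α
  have := Fintype.ofFinite β
  simp only [Nat.card_eq_fintype_card, Fintype.card_subtype] at hm hn ⊢
  exact card_mul_eq_card_mul r (fun a _ => hm a) (fun b _ => hn b)

theorem Finset.card_filter_univ_eq_natCard {α : Type*} [Fintype α] (p : α → Prop)
    [DecidablePred p] : #{x | p x} = Nat.card {x // p x} := by
  rw [Nat.card_eq_fintype_card, Fintype.card_subtype]

def InBlock {R M : Type*} [Semiring R] [AddCommMonoid M] [Module R M]
    (𝓑 : Set (Submodule R M)) (I : Submodule R M) : Prop :=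
  ∃ B ∈ 𝓑, I ≤ B

section SubspaceCounting

variable {K V : Type*} [Field K] [AddCommGroup V] [Module K V]

theorem card_finrank_eq_one [Finite K] :
    Nat.card {L : Submodule K V // finrank K L = 1} = qNum (Nat.card K) (finrank K V) := by
  rw [← Nat.card_congr (Projectivization.equivSubmodule K V),
    Projectivization.card_of_finrank K V rfl, qNum]

theorem card_le_and (W : Submodule K V) (P : Submodule K V → Prop) :
    Nat.card {U : Submodule K V // U ≤ W ∧ P U} =
      Nat.card {U : Submodule K W // P (U.map W.subtype)} :=
  Nat.card_congr <| (Equiv.subtypeSubtypeEquivSubtypeInter (· ≤ W) P).symm.trans <|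
    ((MapSubtype.orderIso W).toEquiv.subtypeEquiv fun _ => Iff.rfl).symm

theorem finrank_comap_subtype_of_le {W W₂ : Submodule K V} (hW : W ≤ W₂) :
    finrank K (W.comap W₂.subtype) = finrank K W := by
  rw [← finrank_map_subtype_eq, map_comap_subtype, inf_eq_right.2 hW]

variable [FiniteDimensional K V]

theorem finrank_comap_mkQ (W : Submodule K V) (U : Submodule K (V ⧸ W)) :
    finrank K (U.comap W.mkQ) = finrank K U + finrank K W := by
  have h := LinearMap.finrank_range_add_finrank_ker (W.mkQ.domRestrict (U.comap W.mkQ))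
  rw [LinearMap.range_domRestrict, map_comap_eq_of_surjective W.mkQ_surjective,
    LinearMap.ker_domRestrict, ker_mkQ] at h
  rw [← h, (comapSubtypeEquivOfLe (le_comap_mkQ W U)).finrank_eq]

theorem card_ge_and_finrank (W : Submodule K V) (P : ℕ → Prop) :
    Nat.card {U : Submodule K V // W ≤ U ∧ P (finrank K U)} =
      Nat.card {U : Submodule K (V ⧸ W) // P (finrank K U + finrank K W)} :=
  Nat.card_congr <|
    (Equiv.subtypeSubtypeEquivSubtypeInter (W ≤ ·) fun U => P (finrank K U)).symm.trans <|
      ((comapMkQRelIso W).toEquiv.subtypeEquiv fun U => by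
        rw [← finrank_comap_mkQ]; rfl).symm

theorem finrank_quotient_comap_subtype {W W₂ : Submodule K V} (hW : W ≤ W₂) :
    finrank K (W₂ ⧸ W.comap W₂.subtype) = finrank K W₂ - finrank K W := by
  have := finrank_quotient_add_finrank (W.comap W₂.subtype)
  rw [finrank_comap_subtype_of_le hW] at this
  omega

theorem card_Icc_finrank {W W₂ : Submodule K V} (hW : W ≤ W₂) (r : ℕ) :
    Nat.card {U : Submodule K V // W ≤ U ∧ U ≤ W₂ ∧ finrank K U = finrank K W + r} =
      Nat.card {U : Submodule K (W₂ ⧸ W.comap W₂.subtype) // finrank K U = r} := by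
  have hW' := finrank_comap_subtype_of_le hW
  calc _ = Nat.card {U : Submodule K V // U ≤ W₂ ∧ W ≤ U ∧ finrank K U = finrank K W + r} :=
        Nat.card_congr <| Equiv.subtypeEquivRight fun U => by tauto
    _ = Nat.card {U : Submodule K W₂ //
          W.comap W₂.subtype ≤ U ∧ finrank K U = finrank K (W.comap W₂.subtype) + r} := by
        rw [card_le_and]
        refine Nat.card_congr <| Equiv.subtypeEquivRight fun U => ?_
        rw [finrank_map_subtype_eq, hW']
        refine and_congr_left fun _ => ⟨fun h => ?_, fun h => ?_⟩
        · simpa [comap_map_eq_of_injective W₂.injective_subtype] using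
            comap_mono (f := W₂.subtype) h
        · simpa [map_comap_subtype, inf_eq_right.2 hW] using map_mono (f := W₂.subtype) h
    _ = _ := by
        rw [card_ge_and_finrank _ (· = finrank K (W.comap W₂.subtype) + r)]
        exact Nat.card_congr <| Equiv.subtypeEquivRight fun U => by omega

theorem card_finrank_eq_and_le {m : ℕ} {W : Submodule K V} (hW : m ≤ finrank K W) :
    Nat.card {C : Submodule K V // finrank K C = m ∧ W ≤ C} =
      if finrank K W = m then 1 else 0 := by
  split_ifs with h
  · refine Nat.card_eq_one_iff_unique.2 ⟨⟨fun C₁ C₂ => Subtype.ext ?_⟩, ⟨⟨W, h, le_rfl⟩⟩⟩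
    exact (eq_of_le_of_finrank_le C₁.2.2 (by omega)).symm.trans
      (eq_of_le_of_finrank_le C₂.2.2 (by omega))
  · exact Nat.card_eq_zero.2 <| .inl ⟨fun C => h (by have := finrank_mono C.2.2; omega)⟩

theorem inf_eq_of_finrank_add_one {S T I : Submodule K V} (hST : S ≤ T)
    (hS : finrank K S + 1 = finrank K T) (hSI : S ≤ I) (hTI : ¬T ≤ I) : T ⊓ I = S := by
  have := finrank_lt_finrank_of_lt (inf_lt_left.2 hTI)
  exact (eq_of_le_of_finrank_le (le_inf hST hSI) (by omega)).symm

variable [Finite K]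

theorem card_Icc_finrank_add_one {W W₂ : Submodule K V} (hW : W ≤ W₂) :
    Nat.card {U : Submodule K V // W ≤ U ∧ U ≤ W₂ ∧ finrank K U = finrank K W + 1} =
      qNum (Nat.card K) (finrank K W₂ - finrank K W) := by
  rw [card_Icc_finrank hW, card_finrank_eq_one, finrank_quotient_comap_subtype hW]

theorem card_finrank_eq_two :
    Nat.card {P : Submodule K V // finrank K P = 2} * (Nat.card K + 1) =
      qNum (Nat.card K) (finrank K V) * qNum (Nat.card K) (finrank K V - 1) := by
  have := Module.finite_of_finite K (M := V)
  have key := Nat.card_mul_eq_card_mul_of_rel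
    (fun (L : {L : Submodule K V // finrank K L = 1})
      (P : {P : Submodule K V // finrank K P = 2}) => L.1 ≤ P.1)
    (m := qNum (Nat.card K) (finrank K V - 1)) (n := Nat.card K + 1)
    (fun L => by
      have h := card_Icc_finrank_add_one (le_top : L.1 ≤ ⊤)
      rw [finrank_top, L.2] at h
      rw [← h]
      exact Nat.card_congr <| (Equiv.subtypeSubtypeEquivSubtypeInter _ _).trans <|
        Equiv.subtypeEquivRight fun P => by simp only [le_top]; tauto)
    (fun P => by
      have h := card_Icc_finrank_add_one (bot_le : ⊥ ≤ P.1)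
      rw [P.2, finrank_bot, Nat.sub_zero, qNum_two] at h
      rw [← h]
      exact Nat.card_congr <| (Equiv.subtypeSubtypeEquivSubtypeInter
        (fun L : Submodule K V => finrank K L = 1) (· ≤ P.1)).trans <|
          Equiv.subtypeEquivRight fun L => by simp only [bot_le]; tauto)
  rw [← key, card_finrank_eq_one]

theorem card_Icc_finrank_add_two {W W₂ : Submodule K V} (hW : W ≤ W₂) :
    Nat.card {U : Submodule K V // W ≤ U ∧ U ≤ W₂ ∧ finrank K U = finrank K W + 2} *
        (Nat.card K + 1) =
      qNum (Nat.card K) (finrank K W₂ - finrank K W) *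
        qNum (Nat.card K) (finrank K W₂ - finrank K W - 1) := by
  rw [card_Icc_finrank hW, card_finrank_eq_two, finrank_quotient_comap_subtype hW]

theorem card_finrank_add_one_eq_finrank :
    Nat.card {H : Submodule K V // finrank K H + 1 = finrank K V} =
      qNum (Nat.card K) (finrank K V) := by
  have h := card_finrank_eq_one (K := K) (V := Dual K V)
  rw [Subspace.dual_finrank_eq] at h
  rw [← h]
  refine Nat.card_congr <| ((Subspace.orderIsoFiniteDimensional (K := K) (V := V)).toEquiv.trans
    OrderDual.ofDual).subtypeEquiv fun H => ?_
  have := Subspace.finrank_add_finrank_dualAnnihilator_eq H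
  change _ ↔ finrank K H.dualAnnihilator = 1
  omega

theorem card_le_finrank_add_one_eq_finrank (W : Submodule K V) :
    Nat.card {U : Submodule K V // U ≤ W ∧ finrank K U + 1 = finrank K W} =
      qNum (Nat.card K) (finrank K W) := by
  rw [card_le_and, ← card_finrank_add_one_eq_finrank]
  simp only [finrank_map_subtype_eq]

theorem exists_inBlock_le {𝓑 : Set (Submodule K V)} {B C : Submodule K V} {m : ℕ}
    (hB : B ∈ 𝓑) (hCB : C ≤ B) (hC : finrank K C = m + 1) :
    ∃ I ≤ C, finrank K I = m ∧ InBlock 𝓑 I := by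
  have h : 0 < Nat.card {U : Submodule K V // U ≤ C ∧ finrank K U + 1 = finrank K C} := by
    rw [card_le_finrank_add_one_eq_finrank, hC, qNum, sum_range_succ']
    exact Nat.succ_pos _
  obtain ⟨⟨I, hIC, hI⟩⟩ := (Nat.card_pos_iff.1 h).1
  exact ⟨I, hIC, by omega, B, hB, hIC.trans hCB⟩

end SubspaceCounting

section SpacesAboveT

open scoped Classical

variable {K : Type*} [Field K] [Fintype K] {n t k : ℕ} {𝓑 : Set (Submodule K (Fin n → K))}

theorem card_finrank_add_two_Icc {T W : Submodule K (Fin n → K)} (hT : finrank K T = t)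
    (hTW : T ≤ W) :
    #{C : Submodule K (Fin n → K) | (finrank K C = t + 2 ∧ T ≤ C) ∧ C ≤ W} * (Nat.card K + 1) =
      qNum (Nat.card K) (finrank K W - t) * qNum (Nat.card K) (finrank K W - t - 1) := by
  rw [← hT, ← card_Icc_finrank_add_two hTW, card_filter_univ_eq_natCard]
  exact congrArg (· * _) <| Nat.card_congr <| Equiv.subtypeEquivRight fun C => by tauto

theorem card_eq_card_avoiding_add {T B : Submodule K (Fin n → K)} (hB : B ∈ 𝓑) :
    #{C : Submodule K (Fin n → K) | finrank K C = t + 2 ∧ T ≤ C} =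
      #{C : Submodule K (Fin n → K) |
          (finrank K C = t + 2 ∧ ∀ I ≤ C, finrank K I = t + 1 → ¬InBlock 𝓑 I) ∧ T ≤ C} +
        (#{C : Submodule K (Fin n → K) | (finrank K C = t + 2 ∧ T ≤ C) ∧ C ≤ B} +
          #{C : Submodule K (Fin n → K) | (finrank K C = t + 2 ∧ T ≤ C) ∧ ¬C ≤ B ∧
            ∃ I ≤ C, finrank K I = t + 1 ∧ InBlock 𝓑 I}) := by
  set A : Finset (Submodule K (Fin n → K)) := {C | finrank K C = t + 2 ∧ T ≤ C}
  set avoids : Submodule K (Fin n → K) → Prop :=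
    fun C => ∀ I ≤ C, finrank K I = t + 1 → ¬InBlock 𝓑 I
  rw [← card_filter_add_card_filter_not (s := A) avoids,
    ← card_filter_add_card_filter_not (s := A.filter fun C => ¬avoids C) (· ≤ B)]
  congr 1
  · congr 1
    ext C
    simp only [A, avoids, mem_filter, mem_univ, true_and]
    tauto
  congr 1 <;> congr 1 <;> ext C <;> simp only [A, avoids, mem_filter, mem_univ, true_and]
  · refine ⟨fun ⟨⟨hA, _⟩, hCB⟩ => ⟨hA, hCB⟩, fun ⟨hA, hCB⟩ => ⟨⟨hA, fun h => ?_⟩, hCB⟩⟩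
    obtain ⟨I, hIC, hI, hb⟩ := exists_inBlock_le hB hCB hA.1
    exact h I hIC hI hb
  · push Not
    tauto

namespace IsSteinerSystem

theorem eq_of_le (h𝓑 : IsSteinerSystem t k 𝓑) {T B₁ B₂ : Submodule K (Fin n → K)}
    (hT : finrank K T = t) (hB₁ : B₁ ∈ 𝓑) (hB₂ : B₂ ∈ 𝓑) (h₁ : T ≤ B₁) (h₂ : T ≤ B₂) :
    B₁ = B₂ :=
  (h𝓑.2.2.2.2 T hT).unique ⟨hB₁, h₁⟩ ⟨hB₂, h₂⟩

theorem inBlock_iff_le (h𝓑 : IsSteinerSystem t k 𝓑) {T B I : Submodule K (Fin n → K)}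
    (hT : finrank K T = t) (hB : B ∈ 𝓑) (hTB : T ≤ B) (hTI : T ≤ I) : InBlock 𝓑 I ↔ I ≤ B :=
  ⟨fun ⟨_, hB', hIB'⟩ => h𝓑.eq_of_le hT hB' hB (hTI.trans hIB') hTB ▸ hIB',
    fun h => ⟨B, hB, h⟩⟩

theorem card_inBlock_ge (h𝓑 : IsSteinerSystem t k 𝓑) {T : Submodule K (Fin n → K)}
    (hT : finrank K T = t) :
    #{I : Submodule K (Fin n → K) | finrank K I = t + 1 ∧ InBlock 𝓑 I ∧ T ≤ I} =
      qNum (Nat.card K) (k - t) := by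
  obtain ⟨B, ⟨hB, hTB⟩, -⟩ := h𝓑.2.2.2.2 T hT
  rw [← h𝓑.2.2.2.1 B hB, ← hT, ← card_Icc_finrank_add_one hTB, card_filter_univ_eq_natCard]
  refine Nat.card_congr <| Equiv.subtypeEquivRight fun I => ?_
  rw [hT]
  exact ⟨fun ⟨hI, hIB, hTI⟩ => ⟨hTI, (h𝓑.inBlock_iff_le hT hB hTB hTI).1 hIB, hI⟩,
    fun ⟨hTI, hIB, hI⟩ => ⟨hI, ⟨B, hB, hIB⟩, hTI⟩⟩

theorem card_inBlock_ge_mul (h𝓑 : IsSteinerSystem t k 𝓑) {S : Submodule K (Fin n → K)}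
    (hS : finrank K S + 1 = t) :
    #{I : Submodule K (Fin n → K) | finrank K I = t + 1 ∧ InBlock 𝓑 I ∧ S ≤ I} *
        (Nat.card K + 1) =
      qNum (Nat.card K) (n - t + 1) * qNum (Nat.card K) (k - t) := by
  have key := card_mul_eq_card_mul (fun T I : Submodule K (Fin n → K) => T ≤ I)
    (s := {T | finrank K T = t ∧ S ≤ T}) (t := {I | finrank K I = t + 1 ∧ InBlock 𝓑 I ∧ S ≤ I})
    (m := qNum (Nat.card K) (k - t)) (n := Nat.card K + 1)
    (fun T hT => by
      rw [mem_filter] at hT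
      rw [bipartiteAbove, filter_filter, ← h𝓑.card_inBlock_ge hT.2.1]
      congr 1
      ext I
      simp only [mem_filter, mem_univ, true_and]
      exact ⟨fun ⟨⟨h₁, h₂, _⟩, h₃⟩ => ⟨h₁, h₂, h₃⟩,
        fun ⟨h₁, h₂, h₃⟩ => ⟨⟨h₁, h₂, hT.2.2.trans h₃⟩, h₃⟩⟩)
    (fun I hI => by
      rw [mem_filter] at hI
      have h := card_Icc_finrank_add_one hI.2.2.2
      rw [hI.2.1, ← hS, show finrank K S + 1 + 1 - finrank K S = 2 by omega, qNum_two] at h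
      rw [bipartiteBelow, filter_filter, ← h, card_filter_univ_eq_natCard]
      exact Nat.card_congr <| Equiv.subtypeEquivRight fun T => by rw [← hS]; tauto)
  have hs := card_Icc_finrank_add_one (le_top : S ≤ ⊤)
  have : n - finrank K S = n - t + 1 := by have := h𝓑.2.1; have := h𝓑.2.2.1; omega
  rw [finrank_top, finrank_fin_fun, this] at hs
  rw [← key, card_filter_univ_eq_natCard, ← hs]
  congr 1
  exact Nat.card_congr <| Equiv.subtypeEquivRight fun T => by
    rw [← hS]; simp only [le_top]; tauto

theorem eq_of_inBlock_of_not_le (h𝓑 : IsSteinerSystem t k 𝓑)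
    {T B C I₁ I₂ : Submodule K (Fin n → K)} (hT : finrank K T = t) (hB : B ∈ 𝓑) (hTB : T ≤ B)
    (hC : finrank K C = t + 2) (hTC : T ≤ C) (hCB : ¬C ≤ B)
    (hI₁ : finrank K I₁ = t + 1) (hI₂ : finrank K I₂ = t + 1)
    (hb₁ : InBlock 𝓑 I₁) (hb₂ : InBlock 𝓑 I₂) (hI₁C : I₁ ≤ C) (hI₂C : I₂ ≤ C) : I₁ = I₂ := by
  by_contra hne
  obtain ⟨B₁, hB₁, hI₁B₁⟩ := hb₁
  obtain ⟨B₂, hB₂, hI₂B₂⟩ := hb₂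
  have hlt : I₁ < I₁ ⊔ I₂ := lt_of_le_of_ne le_sup_left fun h =>
    hne (eq_of_le_of_finrank_le (h ▸ le_sup_right) (by omega)).symm
  have hsup : I₁ ⊔ I₂ = C := eq_of_le_of_finrank_le (sup_le hI₁C hI₂C)
    (by have := finrank_lt_finrank_of_lt hlt; omega)
  have hinf : finrank K ↥(I₁ ⊓ I₂) = t := by
    have := finrank_sup_add_finrank_inf_eq I₁ I₂
    rw [hsup] at this
    omega
  have hB₁₂ : B₁ = B₂ :=
    h𝓑.eq_of_le hinf hB₁ hB₂ (inf_le_left.trans hI₁B₁) (inf_le_right.trans hI₂B₂)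
  have hCB₁ : C ≤ B₁ := hsup ▸ sup_le hI₁B₁ (hB₁₂ ▸ hI₂B₂)
  exact hCB (h𝓑.eq_of_le hT hB₁ hB (hTC.trans hCB₁) hTB ▸ hCB₁)

theorem sum_card_inBlock_le (h𝓑 : IsSteinerSystem t k 𝓑) {T B : Submodule K (Fin n → K)}
    (hT : finrank K T = t) (hB : B ∈ 𝓑) (hTB : T ≤ B) :
    ∑ C ∈ ({C | finrank K C = t + 2 ∧ T ≤ C} : Finset (Submodule K (Fin n → K))),
        #{I : Submodule K (Fin n → K) | (finrank K I = t + 1 ∧ InBlock 𝓑 I) ∧ I ≤ C} =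
      #{C : Submodule K (Fin n → K) | (finrank K C = t + 2 ∧ T ≤ C) ∧ C ≤ B} *
          qNum (Nat.card K) (t + 2) +
        #{C : Submodule K (Fin n → K) | (finrank K C = t + 2 ∧ T ≤ C) ∧ ¬C ≤ B ∧
          ∃ I ≤ C, finrank K I = t + 1 ∧ InBlock 𝓑 I} := by
  rw [← sum_filter_add_sum_filter_not _ (· ≤ B)]
  congr 1
  · rw [filter_filter]
    refine sum_const_nat fun C hC => ?_
    rw [mem_filter] at hC
    rw [← hC.2.1.1, ← card_le_finrank_add_one_eq_finrank C, card_filter_univ_eq_natCard]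
    exact Nat.card_congr <| Equiv.subtypeEquivRight fun I =>
      ⟨fun ⟨⟨h, _⟩, hIC⟩ => ⟨hIC, by omega⟩,
        fun ⟨hIC, h⟩ => ⟨⟨by omega, B, hB, hIC.trans hC.2.2⟩, hIC⟩⟩
  · rw [sum_congr rfl (g := fun C => if ∃ I : Submodule K (Fin n → K),
        I ≤ C ∧ finrank K I = t + 1 ∧ InBlock 𝓑 I then 1 else 0) fun C hC => ?_,
      ← card_filter, filter_filter, filter_filter]
    simp only [mem_filter, mem_univ, true_and] at hC
    obtain ⟨⟨hC, hTC⟩, hCB⟩ := hC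
    split_ifs with h
    · obtain ⟨I, hIC, hI, hb⟩ := h
      refine le_antisymm (card_le_one.2 fun I₁ h₁ I₂ h₂ => ?_) (card_pos.2 ⟨I, by simp [*]⟩)
      simp only [mem_filter, mem_univ, true_and] at h₁ h₂
      exact h𝓑.eq_of_inBlock_of_not_le hT hB hTB hC hTC hCB h₁.1.1 h₂.1.1 h₁.1.2 h₂.1.2 h₁.2 h₂.2
    · rw [card_eq_zero, filter_eq_empty_iff]
      exact fun I _ hI => h ⟨I, hI.2, hI.1⟩

theorem sum_card_ge_of_inBlock (h𝓑 : IsSteinerSystem t k 𝓑) {T : Submodule K (Fin n → K)}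
    (hT : finrank K T = t) :
    ∑ I ∈ ({I | finrank K I = t + 1 ∧ InBlock 𝓑 I} : Finset (Submodule K (Fin n → K))),
        #{C : Submodule K (Fin n → K) | (finrank K C = t + 2 ∧ T ≤ C) ∧ I ≤ C} =
      qNum (Nat.card K) (k - t) * qNum (Nat.card K) (n - t - 1) +
        #{I : Submodule K (Fin n → K) |
          (finrank K I = t + 1 ∧ InBlock 𝓑 I) ∧ finrank K ↥(T ⊓ I) + 1 = t} := by
  rw [← sum_filter_add_sum_filter_not _ (T ≤ ·)]
  congr 1
  · rw [sum_const_nat (m := qNum (Nat.card K) (n - t - 1)) fun I hI => ?_, filter_filter,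
      ← h𝓑.card_inBlock_ge hT]
    · simp only [and_assoc]
    simp only [mem_filter, mem_univ, true_and] at hI
    obtain ⟨⟨hI, -⟩, hTI⟩ := hI
    have h := card_Icc_finrank_add_one (le_top : I ≤ ⊤)
    rw [finrank_top, finrank_fin_fun, hI] at h
    rw [Nat.sub_sub, ← h, card_filter_univ_eq_natCard]
    exact Nat.card_congr <| Equiv.subtypeEquivRight fun C =>
      ⟨fun ⟨⟨hC, _⟩, hIC⟩ => ⟨hIC, le_top, by omega⟩,
        fun ⟨hIC, _, hC⟩ => ⟨⟨by omega, hTI.trans hIC⟩, hIC⟩⟩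
  · rw [sum_congr rfl (g := fun I => if finrank K ↥(T ⊓ I) + 1 = t then 1 else 0)
      fun I hI => ?_, ← card_filter, filter_filter]
    · congr 1
      ext I
      have : finrank K ↥(T ⊓ I) + 1 = t → ¬T ≤ I := fun h hTI => by
        rw [inf_eq_left.2 hTI] at h
        omega
      simp only [mem_filter, mem_univ, true_and]
      tauto
    simp only [mem_filter, mem_univ, true_and] at hI
    obtain ⟨⟨hI, -⟩, hTI⟩ := hI
    have hsup := finrank_sup_add_finrank_inf_eq T I
    have hlt := finrank_lt_finrank_of_lt <|
      lt_of_le_of_ne (le_sup_right : I ≤ T ⊔ I) fun h => hTI (h ▸ le_sup_left)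
    calc _ = Nat.card {C : Submodule K (Fin n → K) // finrank K C = t + 2 ∧ T ⊔ I ≤ C} := by
          rw [card_filter_univ_eq_natCard]
          exact Nat.card_congr <| Equiv.subtypeEquivRight fun C => by rw [sup_le_iff]; tauto
      _ = if finrank K ↥(T ⊔ I) = t + 2 then 1 else 0 := card_finrank_eq_and_le (by omega)
      _ = _ := by split_ifs <;> omega

/-- Both sides count the pairs `(C, I)` with `T ≤ C`, `finrank C = t + 2` and `I` a hyperplane
of `C` lying in a block: the left side by `C`, the right side by `I`. -/
theorem card_flags (h𝓑 : IsSteinerSystem t k 𝓑) {T B : Submodule K (Fin n → K)}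
    (hT : finrank K T = t) (hB : B ∈ 𝓑) (hTB : T ≤ B) :
    #{C : Submodule K (Fin n → K) | (finrank K C = t + 2 ∧ T ≤ C) ∧ C ≤ B} *
          qNum (Nat.card K) (t + 2) +
        #{C : Submodule K (Fin n → K) | (finrank K C = t + 2 ∧ T ≤ C) ∧ ¬C ≤ B ∧
          ∃ I ≤ C, finrank K I = t + 1 ∧ InBlock 𝓑 I} =
      qNum (Nat.card K) (k - t) * qNum (Nat.card K) (n - t - 1) +
        #{I : Submodule K (Fin n → K) |
          (finrank K I = t + 1 ∧ InBlock 𝓑 I) ∧ finrank K ↥(T ⊓ I) + 1 = t} := by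
  rw [← h𝓑.sum_card_inBlock_le hT hB hTB, ← h𝓑.sum_card_ge_of_inBlock hT]
  simpa only [bipartiteAbove, bipartiteBelow, filter_filter] using
    sum_card_bipartiteAbove_eq_sum_card_bipartiteBelow (fun C I : Submodule K (Fin n → K) => I ≤ C)
      (s := {C | finrank K C = t + 2 ∧ T ≤ C}) (t := {I | finrank K I = t + 1 ∧ InBlock 𝓑 I})

theorem card_inBlock_inf_add_mul (h𝓑 : IsSteinerSystem t k 𝓑) {T : Submodule K (Fin n → K)}
    (hT : finrank K T = t) :
    (#{I : Submodule K (Fin n → K) |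
          (finrank K I = t + 1 ∧ InBlock 𝓑 I) ∧ finrank K ↥(T ⊓ I) + 1 = t} +
        qNum (Nat.card K) t * qNum (Nat.card K) (k - t)) * (Nat.card K + 1) =
      qNum (Nat.card K) t * (qNum (Nat.card K) (n - t + 1) * qNum (Nat.card K) (k - t)) := by
  set X : Finset (Submodule K (Fin n → K)) :=
    {I | (finrank K I = t + 1 ∧ InBlock 𝓑 I) ∧ finrank K ↥(T ⊓ I) + 1 = t}
  set H : Finset (Submodule K (Fin n → K)) := {S | S ≤ T ∧ finrank K S + 1 = t}
  have hH : #H = qNum (Nat.card K) t := by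
    rw [card_filter_univ_eq_natCard, ← hT, card_le_finrank_add_one_eq_finrank]
  have hfiber : ∀ S ∈ H, (#{I ∈ X | T ⊓ I = S} + qNum (Nat.card K) (k - t)) *
      (Nat.card K + 1) = qNum (Nat.card K) (n - t + 1) * qNum (Nat.card K) (k - t) := by
    intro S hS
    simp only [H, mem_filter, mem_univ, true_and] at hS
    rw [← h𝓑.card_inBlock_ge_mul hS.2, ← h𝓑.card_inBlock_ge hT,
      ← card_filter_add_card_filter_not
        (s := {I : Submodule K (Fin n → K) | finrank K I = t + 1 ∧ InBlock 𝓑 I ∧ S ≤ I}) (T ≤ ·),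
      filter_filter, filter_filter, add_comm]
    congr 3 <;> ext I <;> simp only [mem_filter, mem_univ, true_and]
    · exact ⟨fun ⟨hI, hb, hTI⟩ => ⟨⟨hI, hb, hS.1.trans hTI⟩, hTI⟩,
        fun ⟨⟨hI, hb, _⟩, hTI⟩ => ⟨hI, hb, hTI⟩⟩
    · refine ⟨fun ⟨⟨⟨hI, hb⟩, _⟩, hS'⟩ => ⟨⟨hI, hb, hS' ▸ inf_le_right⟩, fun hTI => ?_⟩,
        fun ⟨⟨hI, hb, hSI⟩, hTI⟩ => ?_⟩
      · rw [← hS', inf_eq_left.2 hTI, hT] at hS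
        omega
      have := inf_eq_of_finrank_add_one hS.1 (hS.2.trans hT.symm) hSI hTI
      exact ⟨⟨⟨hI, hb⟩, this ▸ hS.2⟩, this⟩
  rw [card_eq_sum_card_fiberwise (f := (T ⊓ ·)) (t := H) fun I hI => ?_, ← hH,
    ← sum_const_nat (s := H) (f := fun _ => qNum (Nat.card K) (k - t)) fun _ _ => rfl,
    ← sum_add_distrib, sum_mul, sum_const_nat hfiber]
  simp only [X, H, coe_filter, mem_univ, true_and, Set.mem_ofPred_eq] at hI ⊢
  exact ⟨inf_le_left, hI.2⟩

end IsSteinerSystem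

end SpacesAboveT

theorem eq_lambda_of_counts {q n t k N a b X : ℕ} (hq : 1 < q) (htk : t < k) (hkn : k ≤ n)
    (hA : (N + (a + b)) * (q + 1) = qNum q (n - t) * qNum q (n - t - 1))
    (ha : a * (q + 1) = qNum q (k - t) * qNum q (k - t - 1))
    (hflags : a * qNum q (t + 2) + b = qNum q (k - t) * qNum q (n - t - 1) + X)
    (hX : (X + qNum q t * qNum q (k - t)) * (q + 1) =
      qNum q t * (qNum q (n - t + 1) * qNum q (k - t))) :
    (N : ℤ) * ((q + 1) * (q - 1) ^ 3) =
      (q : ℤ) ^ (k - t) * ((q : ℤ) ^ (n - k) - 1) *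
        (((q : ℤ) ^ (n - t - 1) - 1) * (q - 1) -
          ((q : ℤ) ^ (t + 1) - 1) * ((q : ℤ) ^ (k - t) - 1)) := by
  have hN : (N : ℚ) * (q + 1) =
      qNum q (n - t) * qNum q (n - t - 1) -
        (1 - qNum q (t + 2)) * (qNum q (k - t) * qNum q (k - t - 1)) -
        (q + 1) * qNum q (k - t) * qNum q (n - t - 1) -
        qNum q t * qNum q (n - t + 1) * qNum q (k - t) + (q + 1) * qNum q t * qNum q (k - t) := by
    have hA' := congrArg (Nat.cast : ℕ → ℚ) hA
    have ha' := congrArg (Nat.cast : ℕ → ℚ) ha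
    have hflags' := congrArg (Nat.cast : ℕ → ℚ) hflags
    have hX' := congrArg (Nat.cast : ℕ → ℚ) hX
    push_cast at hA' ha' hflags' hX'
    linear_combination hA' - (q + 1) * hflags' - (1 - (qNum q (t + 2) : ℚ)) * ha' - hX'
  have hq1 : (q : ℚ) - 1 ≠ 0 := sub_ne_zero.2 (by exact_mod_cast hq.ne')
  have h₁ : (q : ℚ) ^ (n - t) = q ^ (n - t - 1) * q := by rw [← pow_succ]; congr 1; omega
  have h₂ : (q : ℚ) ^ (n - t + 1) = q ^ (n - t - 1) * q ^ 2 := by rw [← pow_add]; congr 1; omega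
  have h₃ : (q : ℚ) ^ (k - t) = q ^ (k - t - 1) * q := by rw [← pow_succ]; congr 1; omega
  have h₄ : (q : ℚ) ^ (k - t) * (q ^ (n - k) - 1) = q ^ (n - t - 1) * q - q ^ (k - t) := by
    rw [mul_sub, ← pow_add, ← pow_succ, mul_one]
    congr 2
    omega
  rw [← @Int.cast_inj ℚ]
  push_cast
  simp only [qNum_cast hq, h₁, h₂, h₃, pow_add] at hN
  rw [h₄, h₃, pow_succ]
  field_simp at hN
  linear_combination hN

theorem stmt16 {K : Type*} [Field K] [Fintype K] {q n t k : ℕ}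
    (hq : Fintype.card K = q)
    (𝓑 : Set (Submodule K (Fin n → K))) (h𝓑 : IsSteinerSystem t k 𝓑)
    (htk : t < k) :
    let 𝓒 : Set (Submodule K (Fin n → K)) :=
      {C | Module.finrank K C = t + 2 ∧
        ∀ I : Submodule K (Fin n → K), I ≤ C → Module.finrank K I = t + 1 →
          ¬ ∃ B ∈ 𝓑, I ≤ B}
    ∀ T : Submodule K (Fin n → K), Module.finrank K T = t →
      (Nat.card {C : Submodule K (Fin n → K) // C ∈ 𝓒 ∧ T ≤ C} : ℤ) *
          ((q + 1) * (q - 1) ^ 3) =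
        (q : ℤ) ^ (k - t) * ((q : ℤ) ^ (n - k) - 1) *
          (((q : ℤ) ^ (n - t - 1) - 1) * (q - 1) -
            ((q : ℤ) ^ (t + 1) - 1) * ((q : ℤ) ^ (k - t) - 1)) := by
  classical
  intro 𝓒 T hT
  obtain ⟨B, ⟨hB, hTB⟩, -⟩ := h𝓑.2.2.2.2 T hT
  have hA := card_finrank_add_two_Icc hT (le_top : T ≤ ⊤)
  simp only [le_top, and_true, finrank_top, finrank_fin_fun] at hA
  have hAB := card_finrank_add_two_Icc hT hTB
  rw [h𝓑.2.2.2.1 B hB] at hAB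
  rw [card_eq_card_avoiding_add hB] at hA
  have key := eq_lambda_of_counts Finite.one_lt_card htk h𝓑.2.2.1 hA hAB
    (h𝓑.card_flags hT hB hTB) (h𝓑.card_inBlock_inf_add_mul hT)
  rw [card_filter_univ_eq_natCard, Nat.card_eq_fintype_card (α := K), hq] at key
  exact key
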